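/- For a, b ≥ 1 and any λ ∈ [0,1], if |t − a/(a+b)| < (1−λ)√(ab)/(a+b)^(3/2) and t ∈ (0,1), then t^a (1-t)^b > λ · a^a b^b/(a+b)^(a+b). -/

import Mathlib

/-!
Let `f x = x ^ a * (1 - x) ^ b`, `c = a / (a + b)` and `δ = √(ab) / (a + b) ^ (3/2)`.
Then `f' = f g` with `g x = a / x - b / (1 - x)`, so `f'' = f (g² - a / x² - b / (1 - x)²)` has the
sign of `(a + b)(a + b - 1)(x - c)² - ab / (a + b)`, and `f` is concave on `[c - δ, c + δ]`, an
interval inside `[0, 1]` when `a, b ≥ 1`. Writing `t` as a convex combination of `c` and an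
endpoint, with weight `|t - c| / δ < 1 - λ` on the endpoint, concavity and `f ≥ 0` give
`f t ≥ (1 - |t - c| / δ) f c > λ f c`, and `f c = a ^ a b ^ b / (a + b) ^ (a + b)`.
-/

open Set

section Beta

variable {a b x : ℝ}

theorem hasDerivAt_rpow_mul_one_sub_rpow (hx : x ∈ Ioo (0 : ℝ) 1) :
    HasDerivAt (fun y : ℝ => y ^ a * (1 - y) ^ b)
      (x ^ a * (1 - x) ^ b * (a / x - b / (1 - x))) x := by
  have hx0 : x ≠ 0 := hx.1.ne'
  have hx1 : 1 - x ≠ 0 := (sub_pos.2 hx.2).ne'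
  refine ((hasDerivAt_id' x).rpow_const (Or.inl hx0)).mul
    (((hasDerivAt_id' x).const_sub 1).rpow_const (Or.inl hx1)) |>.congr_deriv ?_
  rw [Real.rpow_sub_one hx0, Real.rpow_sub_one hx1]
  ring

theorem hasDerivAt_rpow_mul_one_sub_rpow_mul (hx : x ∈ Ioo (0 : ℝ) 1) :
    HasDerivAt (fun y : ℝ => y ^ a * (1 - y) ^ b * (a / y - b / (1 - y)))
      (x ^ a * (1 - x) ^ b * ((a / x - b / (1 - x)) ^ 2 - a / x ^ 2 - b / (1 - x) ^ 2)) x := by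
  have hx0 : x ≠ 0 := hx.1.ne'
  have hx1 : 1 - x ≠ 0 := (sub_pos.2 hx.2).ne'
  have hg := ((hasDerivAt_const x a).fun_div (hasDerivAt_id' x) hx0).fun_sub
    ((hasDerivAt_const x b).fun_div ((hasDerivAt_id' x).const_sub 1) hx1)
  refine (hasDerivAt_rpow_mul_one_sub_rpow hx).mul hg |>.congr_deriv ?_
  field_simp
  ring

theorem sq_div_sub_div_sub_eq (hab : a + b ≠ 0) (hx0 : x ≠ 0) (hx1 : 1 - x ≠ 0) :
    (a / x - b / (1 - x)) ^ 2 - a / x ^ 2 - b / (1 - x) ^ 2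
      = ((a + b) * (a + b - 1) * (x - a / (a + b)) ^ 2 - a * b / (a + b))
          / (x * (1 - x)) ^ 2 := by
  field_simp
  ring

theorem concaveOn_rpow_mul_one_sub_rpow {l r : ℝ} (hl : 0 < l) (hr : r < 1) (hab : a + b ≠ 0)
    (hQ : ∀ x ∈ Ioo l r, (a + b) * (a + b - 1) * (x - a / (a + b)) ^ 2 ≤ a * b / (a + b)) :
    ConcaveOn ℝ (Icc l r) (fun x : ℝ => x ^ a * (1 - x) ^ b) := by
  have hsub : ∀ {x}, x ∈ Icc l r → x ∈ Ioo (0 : ℝ) 1 :=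
    fun hx => ⟨hl.trans_le hx.1, hx.2.trans_lt hr⟩
  refine concaveOn_of_hasDerivWithinAt2_nonpos (convex_Icc l r)
    (fun x hx => (hasDerivAt_rpow_mul_one_sub_rpow (hsub hx)).continuousAt.continuousWithinAt)
    (fun x hx => (hasDerivAt_rpow_mul_one_sub_rpow
      (hsub (interior_subset hx))).hasDerivWithinAt)
    (fun x hx => (hasDerivAt_rpow_mul_one_sub_rpow_mul
      (hsub (interior_subset hx))).hasDerivWithinAt) ?_
  rw [interior_Icc]
  intro x hx
  obtain ⟨hx0, hx1⟩ := hsub (Ioo_subset_Icc_self hx)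
  rw [sq_div_sub_div_sub_eq hab hx0.ne' (sub_pos.2 hx1).ne']
  exact mul_nonpos_of_nonneg_of_nonpos
    (mul_nonneg (Real.rpow_nonneg hx0.le _) (Real.rpow_nonneg (sub_pos.2 hx1).le _))
    (div_nonpos_of_nonpos_of_nonneg (sub_nonpos.2 (hQ x hx)) (sq_nonneg _))

theorem sq_sqrt_mul_div_rpow_three_halves (ha : 0 ≤ a) (hb : 0 ≤ b) :
    (√(a * b) / (a + b) ^ ((3 : ℝ) / 2)) ^ 2 = a * b / (a + b) ^ 3 := by
  rw [div_pow, Real.sq_sqrt (mul_nonneg ha hb), ← Real.rpow_natCast _ 2,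
    ← Real.rpow_mul (add_nonneg ha hb)]
  norm_num

theorem sqrt_mul_div_rpow_three_halves_lt_div (ha : 1 ≤ a) (hb : 0 < b) :
    √(a * b) / (a + b) ^ ((3 : ℝ) / 2) < a / (a + b) := by
  have hab : 0 < a + b := by linarith
  refine lt_of_pow_lt_pow_left₀ 2 (by positivity) ?_
  rw [sq_sqrt_mul_div_rpow_three_halves (by linarith) hb.le, div_pow,
    div_lt_div_iff₀ (by positivity) (by positivity)]
  have hb_lt : b < a * (a + b) := by nlinarith
  nlinarith [mul_lt_mul_of_pos_left hb_lt (by positivity : 0 < a * (a + b) ^ 2)]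

theorem sqrt_mul_div_rpow_three_halves_lt_one_sub_div (ha : 0 < a) (hb : 1 ≤ b) :
    √(a * b) / (a + b) ^ ((3 : ℝ) / 2) < 1 - a / (a + b) := by
  have h := sqrt_mul_div_rpow_three_halves_lt_div hb ha
  rwa [mul_comm b, add_comm b, show b / (a + b) = 1 - a / (a + b) by field_simp; ring] at h

theorem rpow_div_add_mul_one_sub_rpow (ha : 0 < a) (hb : 0 ≤ b) :
    (a / (a + b)) ^ a * (1 - a / (a + b)) ^ b = a ^ a * b ^ b / (a + b) ^ (a + b) := by
  have hab : 0 < a + b := by linarith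
  rw [show 1 - a / (a + b) = b / (a + b) by field_simp; ring, Real.div_rpow ha.le hab.le,
    Real.div_rpow hb hab.le, div_mul_div_comm, ← Real.rpow_add hab]

theorem concaveOn_rpow_mul_one_sub_rpow_near_peak (ha : 1 ≤ a) (hb : 1 ≤ b) :
    ConcaveOn ℝ (Icc (a / (a + b) - √(a * b) / (a + b) ^ ((3 : ℝ) / 2))
      (a / (a + b) + √(a * b) / (a + b) ^ ((3 : ℝ) / 2))) (fun x : ℝ => x ^ a * (1 - x) ^ b) := by
  have hab : 0 < a + b := by linarith
  have hδa := sqrt_mul_div_rpow_three_halves_lt_div ha (by linarith : 0 < b)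
  have hδb := sqrt_mul_div_rpow_three_halves_lt_one_sub_div (by linarith : 0 < a) hb
  refine concaveOn_rpow_mul_one_sub_rpow (by linarith) (by linarith) hab.ne' fun x hx => ?_
  have hx : (x - a / (a + b)) ^ 2 ≤ a * b / (a + b) ^ 3 := by
    rw [← sq_sqrt_mul_div_rpow_three_halves (by linarith) (by linarith)]
    exact sq_le_sq' (by linarith [hx.1]) (by linarith [hx.2])
  calc (a + b) * (a + b - 1) * (x - a / (a + b)) ^ 2
      ≤ (a + b) * (a + b - 1) * (a * b / (a + b) ^ 3) := by
        gcongr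
        exact mul_nonneg hab.le (by linarith)
    _ = (a + b - 1) / (a + b) * (a * b / (a + b)) := by field_simp
    _ ≤ 1 * (a * b / (a + b)) := by
        gcongr
        exact (div_le_one hab).2 (by linarith)
    _ = a * b / (a + b) := one_mul _

end Beta

theorem ConcaveOn.mul_lt_of_abs_sub_lt {f : ℝ → ℝ} {c δ lam t : ℝ}
    (hf : ConcaveOn ℝ (Icc (c - δ) (c + δ)) f) (hδ : 0 < δ)
    (hleft : 0 ≤ f (c - δ)) (hright : 0 ≤ f (c + δ)) (hc : 0 < f c) (hlam : 0 ≤ lam)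
    (ht : |t - c| < (1 - lam) * δ) :
    lam * f c < f t := by
  set θ := |t - c| / δ
  have hθ0 : 0 ≤ θ := by positivity
  have hθlam : θ < 1 - lam := (div_lt_iff₀ hδ).2 ht
  obtain ⟨e, he, hfe, hte⟩ :
      ∃ e ∈ Icc (c - δ) (c + δ), 0 ≤ f e ∧ (1 - θ) * c + θ * e = t := by
    rcases le_or_gt c t with hct | htc
    · refine ⟨c + δ, ⟨by linarith, le_rfl⟩, hright, ?_⟩
      simp only [θ, abs_of_nonneg (sub_nonneg.2 hct)]
      field_simp
      ring
    · refine ⟨c - δ, ⟨le_rfl, by linarith⟩, hleft, ?_⟩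
      simp only [θ, abs_of_neg (sub_neg.2 htc)]
      field_simp
      ring
  have hc_mem : c ∈ Icc (c - δ) (c + δ) := ⟨by linarith, by linarith⟩
  have hconc := hf.2 hc_mem he (by linarith : 0 ≤ 1 - θ) hθ0 (by ring)
  rw [smul_eq_mul, smul_eq_mul, smul_eq_mul, smul_eq_mul, hte] at hconc
  calc lam * f c < (1 - θ) * f c := by gcongr; linarith
    _ ≤ (1 - θ) * f c + θ * f e := le_add_of_nonneg_right (mul_nonneg hθ0 hfe)
    _ ≤ f t := hconc

theorem stmt2_general (a b lam t : ℝ) (ha : 1 ≤ a) (hb : 1 ≤ b)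
    (hlam : lam ∈ Set.Icc (0:ℝ) 1)
    (h : |t - a / (a + b)| < (1 - lam) * Real.sqrt (a * b) / (a + b) ^ ((3:ℝ)/2)) :
    lam * (a ^ a * b ^ b / (a + b) ^ (a + b)) < t ^ a * (1 - t) ^ b := by
  set δ := √(a * b) / (a + b) ^ ((3 : ℝ) / 2)
  have hδ : 0 < δ := by positivity
  have hδa : δ < a / (a + b) := sqrt_mul_div_rpow_three_halves_lt_div ha (by linarith)
  have hδb := sqrt_mul_div_rpow_three_halves_lt_one_sub_div (by linarith : 0 < a) hb
  have hnonneg : ∀ x ∈ Icc (0 : ℝ) 1, 0 ≤ x ^ a * (1 - x) ^ b := fun x hx =>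
    mul_nonneg (Real.rpow_nonneg hx.1 _) (Real.rpow_nonneg (sub_nonneg.2 hx.2) _)
  have hpeak := rpow_div_add_mul_one_sub_rpow (by linarith : 0 < a) (by linarith : 0 ≤ b)
  rw [← hpeak]
  refine (concaveOn_rpow_mul_one_sub_rpow_near_peak ha hb).mul_lt_of_abs_sub_lt hδ
    (hnonneg _ ⟨by linarith, by linarith⟩) (hnonneg _ ⟨by linarith, by linarith⟩) ?_ hlam.1
    (by rwa [mul_div_assoc] at h)
  rw [hpeak]
  positivity

/-- For `a, b ≥ 1` and `λ ∈ [0,1]`: if `t ∈ (0,1)` and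
`|t - a/(a+b)| < (1-λ)√(ab)/(a+b)^(3/2)`, then
`t^a (1-t)^b > λ · a^a b^b/(a+b)^(a+b)`. -/
theorem stmt2 (a b lam t : ℝ) (ha : 1 ≤ a) (hb : 1 ≤ b)
    (hlam : lam ∈ Set.Icc (0:ℝ) 1) (ht : t ∈ Set.Ioo (0:ℝ) 1)
    (h : |t - a / (a + b)| < (1 - lam) * Real.sqrt (a * b) / (a + b) ^ ((3:ℝ)/2)) :
    lam * (a ^ a * b ^ b / (a + b) ^ (a + b)) < t ^ a * (1 - t) ^ b :=
  stmt2_general a b lam t ha hb hlam h
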